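/- Let f(x) = a₁x + ⋯ + a_k x^k + ⋯ be a formal power series with zero constant term, and write (f(x))^j = ∑_{m} a_m^{[j]} x^m and f^(n)(x) = ∑_k f_k^(n) x^k. Then for every k ≥ 2 and n ≥ 1, f_k^(n) = a_k a₁^{n−1} ∑_{i=0}^{n−1} a₁^{i(k−1)} + ∑_{i=0}^{n−2} a₁^{k i} ( ∑_{j=2}^{k−1} f_j^{(n−i−1)} a_k^{[j]} ). -/

import Mathlib

open PowerSeries Finset

/-- Composition of formal power series (meaningful when `g` has zero constant term):
the coefficient of `x^k` in `f(g(x))` is `∑_{j=0}^{k} f_j · [x^k](g^j)`. -/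
noncomputable def pscomp {R : Type*} [CommRing R] (f g : PowerSeries R) : PowerSeries R :=
  PowerSeries.mk fun k =>
    ∑ j ∈ Finset.range (k + 1), (PowerSeries.coeff j f) * (PowerSeries.coeff k (g ^ j))

/-- The `n`-fold composition `f^(n)`: `f^(1) = f`, `f^(n) = f^(n-1) ∘ f`. -/
noncomputable def psiter {R : Type*} [CommRing R] (f : PowerSeries R) : ℕ → PowerSeries R
  | 0 => PowerSeries.X
  | 1 => f
  | (n + 2) => pscomp (psiter f (n + 1)) f

/-! Write `c_n = f_k^(n)` and `S_n = ∑_{j=2}^{k-1} f_j^(n) a_k^{[j]}`. In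
`[x^k] (g ∘ f) = ∑_{j ≤ k} g_j a_k^{[j]}` the terms `j = 1` and `j = k` are `g_1 a_k` and `g_k a₁^k`
(`f` has no constant term), and `f_1^(n) = a₁^n`; so `c_{n+1} = a₁^k c_n + (a₁^n a_k + S_n)`. With
`f^(0) = x` this holds from `n = 0` on, where `c_0 = S_0 = 0`, and unrolling it gives the formula. -/

theorem eq_pow_mul_add_sum_of_linear_recurrence {R : Type*} [Semiring R] {x y : ℕ → R} {r : R}
    (h : ∀ n, x (n + 1) = r * x n + y n) (n : ℕ) :
    x n = r ^ n * x 0 + ∑ i ∈ range n, r ^ i * y (n - i - 1) := by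
  induction n with
  | zero => simp
  | succ n ih =>
    rw [h, ih, sum_range_succ', mul_add, mul_sum]
    simp only [Nat.add_sub_add_right, Nat.sub_zero, Nat.add_sub_cancel, pow_zero, one_mul,
      pow_succ', mul_assoc, add_assoc]

theorem sum_pow_mul_pow_sub_eq_pow_mul_sum {M : Type*} [Semiring M] (A : M) {k : ℕ} (hk : 1 ≤ k)
    (n : ℕ) :
    ∑ i ∈ range n, A ^ (k * i) * A ^ (n - i - 1) = A ^ (n - 1) * ∑ i ∈ range n, A ^ (i * (k - 1)) := by
  rw [mul_sum]
  refine sum_congr rfl fun i hi => ?_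
  have hi : i < n := mem_range.mp hi
  rw [← pow_add, ← pow_add]
  congr 1
  obtain ⟨l, rfl⟩ := Nat.exists_eq_add_of_le' hk
  rw [Nat.add_sub_cancel, Nat.add_mul, one_mul, Nat.mul_comm l]
  omega

theorem PowerSeries.coeff_self_pow {R : Type*} [CommSemiring R] {f : R⟦X⟧}
    (hf : constantCoeff f = 0) (k : ℕ) : coeff k (f ^ k) = coeff 1 f ^ k := by
  obtain ⟨g, rfl⟩ := X_dvd_iff.mpr hf
  rw [mul_pow, coeff_X_pow_mul', if_pos le_rfl, Nat.sub_self, coeff_zero_eq_constantCoeff_apply,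
    map_pow, ← coeff_zero_eq_constantCoeff_apply, ← coeff_succ_X_mul]

section

variable {R : Type*} [CommRing R] {f : R⟦X⟧}

theorem pscomp_X (hf : constantCoeff f = 0) : pscomp X f = f := by
  ext m
  rcases m with _ | m
  · simp [pscomp, hf]
  · simp [pscomp, coeff_X]

theorem psiter_succ (hf : constantCoeff f = 0) (n : ℕ) :
    psiter f (n + 1) = pscomp (psiter f n) f := by
  cases n with
  | zero => exact (pscomp_X hf).symm
  | succ n => rfl

theorem coeff_one_pscomp (P : R⟦X⟧) : coeff 1 (pscomp P f) = coeff 1 P * coeff 1 f := by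
  simp [pscomp, sum_range_succ, coeff_one]

theorem coeff_one_psiter (hf : constantCoeff f = 0) (n : ℕ) :
    coeff 1 (psiter f n) = coeff 1 f ^ n := by
  induction n with
  | zero => simp [psiter]
  | succ n ih => rw [psiter_succ hf, coeff_one_pscomp, ih, pow_succ]

theorem coeff_pscomp_of_two_le (hf : constantCoeff f = 0) (P : R⟦X⟧) {k : ℕ} (hk : 2 ≤ k) :
    coeff k (pscomp P f) = coeff 1 P * coeff k f
      + ∑ j ∈ Icc 2 (k - 1), coeff j P * coeff k (f ^ j) + coeff k P * coeff 1 f ^ k := by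
  rw [Icc_sub_one_right_eq_Ico_of_not_isMin (not_isMin_of_lt hk), pscomp, coeff_mk,
    sum_range_succ, ← sum_range_add_sum_Ico _ hk, coeff_self_pow hf]
  simp [sum_range_succ, coeff_one, show k ≠ 0 by omega]

end

theorem main_recursive_lemma_general {R : Type*} [CommRing R] (a : ℕ → R) (h0 : a 0 = 0)
    (k n : ℕ) (hk : 2 ≤ k) :
    PowerSeries.coeff k (psiter (PowerSeries.mk a) n) =
      a k * a 1 ^ (n - 1) * (∑ i ∈ Finset.range n, a 1 ^ (i * (k - 1)))
      + ∑ i ∈ Finset.range (n - 1), a 1 ^ (k * i) *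
          ∑ j ∈ Finset.Icc 2 (k - 1),
            PowerSeries.coeff j (psiter (PowerSeries.mk a) (n - i - 1)) *
              PowerSeries.coeff k ((PowerSeries.mk a) ^ j) := by
  set f := mk a
  have hf : constantCoeff f = 0 := by simp [f, h0]
  set S : ℕ → R := fun t => ∑ j ∈ Icc 2 (k - 1), coeff j (psiter f t) * coeff k (f ^ j)
  have hrec (m : ℕ) : coeff k (psiter f (m + 1)) =
      a 1 ^ k * coeff k (psiter f m) + (a 1 ^ m * a k + S m) := by
    rw [psiter_succ hf, coeff_pscomp_of_two_le hf _ hk, coeff_one_psiter hf, coeff_mk, coeff_mk]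
    ring
  have hc0 : coeff k (psiter f 0) = 0 := by simp [psiter, coeff_X, show k ≠ 1 by omega]
  have hS0 : S 0 = 0 := sum_eq_zero fun j hj => by
    have := (mem_Icc.mp hj).1
    simp [psiter, coeff_X, show j ≠ 1 by omega]
  rw [eq_pow_mul_add_sum_of_linear_recurrence (x := fun m => coeff k (psiter f m)) hrec n, hc0,
    mul_zero, zero_add]
  simp_rw [← pow_mul, mul_add, sum_add_distrib]
  congr 1
  · rw [mul_assoc (a k), ← sum_pow_mul_pow_sub_eq_pow_mul_sum _ (by omega), mul_sum]
    exact sum_congr rfl fun i _ => by ring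
  · rcases n with _ | n
    · simp
    · rw [sum_range_succ, Nat.add_sub_cancel, Nat.add_sub_cancel_left, Nat.sub_self, hS0,
        mul_zero, add_zero]

/-- The Main Recursive Lemma: for `k ≥ 2` and `n ≥ 1`,
`f_k^(n) = a_k a₁^{n−1} ∑_{i=0}^{n−1} a₁^{i(k−1)}
  + ∑_{i=0}^{n−2} a₁^{ki} ∑_{j=2}^{k−1} f_j^{(n−i−1)} a_k^{[j]}`,
where `a_k^{[j]}` is the coefficient of `x^k` in `(f(x))^j`. -/
theorem main_recursive_lemma {R : Type*} [CommRing R] (a : ℕ → R) (h0 : a 0 = 0)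
    (k n : ℕ) (hk : 2 ≤ k) (hn : 1 ≤ n) :
    PowerSeries.coeff k (psiter (PowerSeries.mk a) n) =
      a k * a 1 ^ (n - 1) * (∑ i ∈ Finset.range n, a 1 ^ (i * (k - 1)))
      + ∑ i ∈ Finset.range (n - 1), a 1 ^ (k * i) *
          ∑ j ∈ Finset.Icc 2 (k - 1),
            PowerSeries.coeff j (psiter (PowerSeries.mk a) (n - i - 1)) *
              PowerSeries.coeff k ((PowerSeries.mk a) ^ j) :=
  main_recursive_lemma_general a h0 k n hk
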